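/- Let b ≥ θ ≥ 2 be integers. For p ∈ (0,1] define p_∞^+(p) = inf{x ∈ (0,1] : x = p + (1−p)·Bin(b,x,θ)}. Then p_∞^+(p) → 0 as p → 0+. -/
import Mathlib


open Filter

/-- Bin(κ,x,θ) = ∑_{i=θ}^{κ} (κ choose i) x^i (1−x)^{κ−i}. -/
noncomputable def binTail (κ : ℕ) (x : ℝ) (θ : ℕ) : ℝ :=
  ∑ i ∈ Finset.Icc θ κ, (κ.choose i : ℝ) * x ^ i * (1 - x) ^ (κ - i)

lemma binTail_nonneg (κ θ : ℕ) {x : ℝ} (h0 : 0 ≤ x) (h1 : x ≤ 1) :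
    0 ≤ binTail κ x θ := by
  apply Finset.sum_nonneg
  intro i _
  have h1x : (0:ℝ) ≤ 1 - x := by linarith
  exact mul_nonneg (mul_nonneg (by positivity) (pow_nonneg h0 _)) (pow_nonneg h1x _)

lemma binTail_le (κ θ : ℕ) (hθ : 2 ≤ θ) {x : ℝ} (h0 : 0 ≤ x) (h1 : x ≤ 1) :
    binTail κ x θ ≤ 2 ^ κ * x ^ 2 := by
  have h1x : (0:ℝ) ≤ 1 - x := by linarith
  have step : binTail κ x θ ≤ ∑ i ∈ Finset.Icc θ κ, (κ.choose i : ℝ) * x ^ 2 := by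
    apply Finset.sum_le_sum
    intro i hi
    have hi2 : 2 ≤ i := le_trans hθ (Finset.mem_Icc.mp hi).1
    have hx : x ^ i ≤ x ^ 2 := pow_le_pow_of_le_one h0 h1 hi2
    have h2 : (1 - x) ^ (κ - i) ≤ 1 := pow_le_one₀ h1x (by linarith)
    calc (κ.choose i : ℝ) * x ^ i * (1 - x) ^ (κ - i)
        ≤ (κ.choose i : ℝ) * x ^ i * 1 := by
          apply mul_le_mul_of_nonneg_left h2
          positivity
      _ = (κ.choose i : ℝ) * x ^ i := mul_one _
      _ ≤ (κ.choose i : ℝ) * x ^ 2 := by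
          apply mul_le_mul_of_nonneg_left hx
          positivity
  have hsum : ∑ i ∈ Finset.Icc θ κ, (κ.choose i : ℝ) ≤ 2 ^ κ := by
    have hsub : ∑ i ∈ Finset.Icc θ κ, (κ.choose i : ℝ)
        ≤ ∑ i ∈ Finset.range (κ + 1), (κ.choose i : ℝ) := by
      apply Finset.sum_le_sum_of_subset_of_nonneg
      · intro i hi
        exact Finset.mem_range.mpr (Nat.lt_succ_of_le (Finset.mem_Icc.mp hi).2)
      · intros; positivity
    have heq : ∑ i ∈ Finset.range (κ + 1), (κ.choose i : ℝ) = 2 ^ κ := by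
      exact_mod_cast congrArg (Nat.cast : ℕ → ℝ) (Nat.sum_range_choose κ)
    linarith
  calc binTail κ x θ ≤ ∑ i ∈ Finset.Icc θ κ, (κ.choose i : ℝ) * x ^ 2 := step
    _ = (∑ i ∈ Finset.Icc θ κ, (κ.choose i : ℝ)) * x ^ 2 := by rw [Finset.sum_mul]
    _ ≤ 2 ^ κ * x ^ 2 := by
        apply mul_le_mul_of_nonneg_right hsum
        positivity

lemma binTail_continuous (κ θ : ℕ) : Continuous (fun x : ℝ => binTail κ x θ) := by
  unfold binTail
  apply continuous_finset_sum
  intro i _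
  fun_prop

lemma binTail_zero (κ θ : ℕ) (hθ : 1 ≤ θ) : binTail κ 0 θ = 0 := by
  apply Finset.sum_eq_zero
  intro i hi
  have : 1 ≤ i := le_trans hθ (Finset.mem_Icc.mp hi).1
  rw [zero_pow (by omega)]
  ring

/-- p_∞^+(p) = inf{x ∈ (0,1] : x = p + (1−p)·Bin(b,x,θ)} tends to 0 as p → 0+. -/
theorem stmt15 (b θ : ℕ) (hθ : 2 ≤ θ) (hbθ : θ ≤ b) :
    Tendsto
      (fun p : ℝ => sInf {x ∈ Set.Ioc (0:ℝ) 1 | x = p + (1 - p) * binTail b x θ})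
      (nhdsWithin 0 (Set.Ioi 0)) (nhds 0) := by
  rw [Metric.tendsto_nhdsWithin_nhds]
  intro ε hε
  set ε' := min ε (((2:ℝ) ^ (b + 1))⁻¹) with hε'def
  have h2b : (0:ℝ) < 2 ^ (b + 1) := by positivity
  have hε'pos : 0 < ε' := lt_min hε (by positivity)
  have hε'le : ε' ≤ ε := min_le_left _ _
  have hε'le2 : ε' ≤ ((2:ℝ) ^ (b + 1))⁻¹ := min_le_right _ _
  have h2b1 : (1:ℝ) ≤ 2 ^ (b + 1) := one_le_pow₀ (by norm_num)
  have hε'le1 : ε' ≤ 1 := hε'le2.trans (by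
    rw [inv_le_one_iff₀]; right; exact h2b1)
  refine ⟨ε' / 2, by positivity, ?_⟩
  intro p hp hdist
  have hp0 : (0:ℝ) < p := hp
  have hpε : p < ε' / 2 := by
    rwa [Real.dist_eq, sub_zero, abs_of_pos hp0] at hdist
  set f : ℝ → ℝ := fun x => x - p - (1 - p) * binTail b x θ with hfdef
  have hcont : ContinuousOn f (Set.Icc 0 ε') := by
    apply Continuous.continuousOn
    have := binTail_continuous b θ
    fun_prop
  have hf0 : f 0 < 0 := by
    simp only [hfdef, binTail_zero b θ (by omega)]
    linarith
  have hBε' : binTail b ε' θ ≤ ε' / 2 := by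
    have h1 : binTail b ε' θ ≤ 2 ^ b * ε' ^ 2 :=
      binTail_le b θ hθ hε'pos.le hε'le1
    have h2 : (2:ℝ) ^ b * ε' ≤ 1 / 2 := by
      have : ε' * 2 ^ (b + 1) ≤ 1 := by
        have h := mul_le_mul_of_nonneg_right hε'le2 h2b.le
        rwa [inv_mul_cancel₀ (ne_of_gt h2b)] at h
      have hpow : (2:ℝ) ^ (b + 1) = 2 * 2 ^ b := by ring
      nlinarith [pow_pos (show (0:ℝ) < 2 by norm_num) b]
    nlinarith [hε'pos]
  have hBnn : 0 ≤ binTail b ε' θ := binTail_nonneg b θ hε'pos.le hε'le1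
  have hfε' : 0 < f ε' := by
    simp only [hfdef]
    nlinarith
  obtain ⟨x, hx, hfx⟩ := intermediate_value_Ioo hε'pos.le hcont ⟨hf0, hfε'⟩
  set S := {x ∈ Set.Ioc (0:ℝ) 1 | x = p + (1 - p) * binTail b x θ} with hSdef
  have hxS : x ∈ S := by
    constructor
    · exact ⟨hx.1, le_trans hx.2.le hε'le1⟩
    · simp only [hfdef] at hfx
      linarith [hfx]
  have hbdd : BddBelow S := ⟨0, fun y hy => hy.1.1.le⟩
  have h1 : sInf S ≤ x := csInf_le hbdd hxS
  have h2 : 0 ≤ sInf S := le_csInf ⟨x, hxS⟩ (fun y hy => hy.1.1.le)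
  rw [Real.dist_eq, sub_zero, abs_of_nonneg h2]
  calc sInf S ≤ x := h1
    _ < ε' := hx.2
    _ ≤ ε := hε'le
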